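/- arXiv:1905.09696 — 2 statements merged into one kernel-verified Lean document; each statement's English description precedes it below -/
import Mathlib

section
/- Let $A$ be a positive definite symmetric $n \times n$ real matrix with $n \geq 2$, and let $S_{n-1}(A)$ denote the $(n-1)$-st elementary symmetric function of the eigenvalues of $A$ (equivalently, the trace of the cofactor matrix of $A$). Then $S_{n-1}(A) \geq (\operatorname{trace} A)^{\frac{1}{n-1}} (\det A)^{\frac{n-2}{n-1}}$. -/
/-!
Diagonalising `A` with eigenvalues `λᵢ > 0`, the trace of the adjugate is
`∑ᵢ ∏_{j ≠ i} λⱼ = (∏ λ) · ∑ λᵢ⁻¹`. Raising the claim to the power `n - 1` and dividing by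
`(∏ λ)^(n-1)`, it becomes `(∑ λ) / ∏ λ ≤ (∑ λᵢ⁻¹)^(n-1)`. With `xᵢ = λᵢ⁻¹` the left side is
`∑ᵢ ∏_{j ≠ i} xⱼ`, and for nonnegative `x` this sum of products of `n - 1` distinct variables is
dominated by `(∑ x)^(n-1)`.
-/

open Finset

section OrderedSemiring

variable {ι R : Type*} [CommSemiring R] [PartialOrder R] [IsOrderedRing R]

theorem pow_add_le_add_pow_succ {a b : R} (ha : 0 ≤ a) (hb : 0 ≤ b) (k : ℕ) :
    a ^ (k + 1) + b * a ^ k ≤ (b + a) ^ (k + 1) :=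
  calc a ^ (k + 1) + b * a ^ k = (b + a) * a ^ k := by ring
    _ ≤ (b + a) * (b + a) ^ k := by gcongr; exact le_add_of_nonneg_left hb
    _ = (b + a) ^ (k + 1) := by ring

theorem Finset.sum_prod_erase_le_sum_pow [DecidableEq ι] {s : Finset ι} (hs : s.Nonempty)
    {y : ι → R} (hy : ∀ i ∈ s, 0 ≤ y i) :
    ∑ i ∈ s, ∏ j ∈ s.erase i, y j ≤ (∑ i ∈ s, y i) ^ (#s - 1) := by
  induction hs using Finset.Nonempty.cons_induction with
  | singleton a => simp
  | cons a s ha hs ih =>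
    have hy' : ∀ i ∈ s, 0 ≤ y i := fun i hi => hy i (mem_cons_of_mem hi)
    obtain ⟨k, hk⟩ : ∃ k, #s = k + 1 := ⟨#s - 1, by have := hs.card_pos; omega⟩
    have herase : ∀ i ∈ s, ∏ j ∈ (s.cons a ha).erase i, y j = y a * ∏ j ∈ s.erase i, y j :=
      fun i hi => by rw [erase_cons_of_ne _ (ne_of_mem_of_not_mem hi ha).symm, prod_cons]
    have hprod : ∏ j ∈ s, y j ≤ (∑ i ∈ s, y i) ^ (k + 1) :=
      calc ∏ j ∈ s, y j ≤ ∏ _j ∈ s, ∑ i ∈ s, y i :=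
            prod_le_prod hy' fun j hj => single_le_sum hy' hj
        _ = (∑ i ∈ s, y i) ^ (k + 1) := by rw [prod_const, hk]
    rw [sum_cons, erase_cons, sum_congr rfl herase, ← mul_sum, sum_cons, card_cons, hk,
      Nat.add_sub_cancel]
    calc ∏ j ∈ s, y j + y a * ∑ i ∈ s, ∏ j ∈ s.erase i, y j
        ≤ (∑ i ∈ s, y i) ^ (k + 1) + y a * (∑ i ∈ s, y i) ^ k := by
          gcongr
          · exact hy a (mem_cons_self a s)
          · simpa [hk] using ih hy'
      _ ≤ (y a + ∑ i ∈ s, y i) ^ (k + 1) :=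
          pow_add_le_add_pow_succ (sum_nonneg hy') (hy a (mem_cons_self a s)) k

end OrderedSemiring

theorem Finset.prod_erase_eq_div₀ {ι M : Type*} [DecidableEq ι] [CommGroupWithZero M]
    {s : Finset ι} {f : ι → M} {a : ι} (h : a ∈ s) (ha : f a ≠ 0) :
    ∏ j ∈ s.erase a, f j = (∏ j ∈ s, f j) / f a := by
  rw [eq_div_iff ha, prod_erase_mul _ _ h]

section Real

variable {ι : Type*} [DecidableEq ι] {s : Finset ι} {x : ι → ℝ}

theorem Finset.sum_div_prod_le_sum_inv_pow (hs : s.Nonempty) (hx : ∀ i ∈ s, 0 < x i) :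
    (∑ i ∈ s, x i) / ∏ i ∈ s, x i ≤ (∑ i ∈ s, (x i)⁻¹) ^ (#s - 1) := by
  calc (∑ i ∈ s, x i) / ∏ i ∈ s, x i = ∑ i ∈ s, ∏ j ∈ s.erase i, (x j)⁻¹ := by
        rw [sum_div]
        refine sum_congr rfl fun i hi => ?_
        rw [prod_erase_eq_div₀ (f := fun j => (x j)⁻¹) hi (inv_ne_zero (hx i hi).ne'),
          prod_inv_distrib, inv_div_inv]
    _ ≤ (∑ i ∈ s, (x i)⁻¹) ^ (#s - 1) :=
        sum_prod_erase_le_sum_pow hs fun i hi => (inv_pos.mpr (hx i hi)).le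

theorem Finset.sum_rpow_mul_prod_rpow_le_sum_prod_erase (hs : 2 ≤ #s) (hx : ∀ i ∈ s, 0 < x i) :
    (∑ i ∈ s, x i) ^ ((1 : ℝ) / (#s - 1)) * (∏ i ∈ s, x i) ^ (((#s : ℝ) - 2) / (#s - 1)) ≤
      ∑ i ∈ s, ∏ j ∈ s.erase i, x j := by
  obtain ⟨k, hk⟩ : ∃ k, #s = k + 1 := ⟨#s - 1, by omega⟩
  have hk₀ : k ≠ 0 := by omega
  have hcast : ((#s : ℝ) - 1) = k ∧ ((#s : ℝ) - 2) = k - 1 := by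
    constructor <;> (rw [hk]; push_cast; ring)
  rw [hcast.1, hcast.2]
  set T := ∑ i ∈ s, x i
  set P := ∏ i ∈ s, x i
  set X := ∑ i ∈ s, (x i)⁻¹
  have hP : 0 < P := prod_pos hx
  have hX : 0 ≤ X := sum_nonneg fun i hi => (inv_pos.mpr (hx i hi)).le
  have hsum : ∑ i ∈ s, ∏ j ∈ s.erase i, x j = P * X := by
    rw [mul_sum]
    exact sum_congr rfl fun i hi =>
      (prod_erase_eq_div₀ hi (hx i hi).ne').trans (div_eq_mul_inv _ _)
  have hTP : T ≤ P * X ^ k := by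
    have := sum_div_prod_le_sum_inv_pow (card_pos.mp (by omega)) hx
    rwa [hk, Nat.add_sub_cancel, div_le_iff₀' hP] at this
  calc T ^ ((1 : ℝ) / k) * P ^ (((k : ℝ) - 1) / k)
      ≤ (P * X ^ k) ^ ((1 : ℝ) / k) * P ^ (((k : ℝ) - 1) / k) := by
        gcongr
        exact sum_nonneg fun i hi => (hx i hi).le
    _ = P ^ ((1 : ℝ) / k + ((k : ℝ) - 1) / k) * X := by
        rw [Real.mul_rpow hP.le (by positivity), one_div, Real.pow_rpow_inv_natCast hX hk₀,
          Real.rpow_add hP]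
        ring
    _ = ∑ i ∈ s, ∏ j ∈ s.erase i, x j := by
        rw [hsum, ← add_div, add_sub_cancel, div_self (by exact_mod_cast hk₀), Real.rpow_one]

end Real

theorem Matrix.trace_adjugate_mul_mul_of_mul_eq_one {n R : Type*} [Fintype n] [DecidableEq n]
    [CommRing R] {U V : Matrix n n R} (hVU : V * U = 1) (B : Matrix n n R) :
    (U * B * V).adjugate.trace = B.adjugate.trace := by
  rw [adjugate_mul_distrib, adjugate_mul_distrib, trace_mul_comm, mul_assoc,
    ← adjugate_mul_distrib, hVU, adjugate_one, mul_one]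

theorem Matrix.IsHermitian.trace_adjugate_eq_sum_prod_erase_eigenvalues {n 𝕜 : Type*} [Fintype n]
    [DecidableEq n] [RCLike 𝕜] {A : Matrix n n 𝕜} (hA : A.IsHermitian) :
    A.adjugate.trace = ∑ i, ∏ j ∈ univ.erase i, (hA.eigenvalues j : 𝕜) := by
  conv_lhs => rw [hA.spectral_theorem]
  rw [Unitary.conjStarAlgAut_apply,
    trace_adjugate_mul_mul_of_mul_eq_one (mem_unitaryGroup_iff'.mp hA.eigenvectorUnitary.2),
    adjugate_diagonal, trace_diagonal]
  rfl

theorem stmt_2_general (n : ℕ) (hn : 2 ≤ n) (A : Matrix (Fin n) (Fin n) ℝ)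
    (hpos : A.PosDef) :
    A.adjugate.trace ≥ A.trace ^ ((1 : ℝ) / (n - 1)) * A.det ^ (((n : ℝ) - 2) / ((n : ℝ) - 1)) := by
  have hA := hpos.isHermitian
  have key := sum_rpow_mul_prod_rpow_le_sum_prod_erase (s := univ) (x := hA.eigenvalues)
    (by simpa using hn) fun i _ => hpos.eigenvalues_pos i
  rw [card_univ, Fintype.card_fin] at key
  rw [ge_iff_le, hA.trace_eq_sum_eigenvalues, hA.det_eq_prod_eigenvalues,
    hA.trace_adjugate_eq_sum_prod_erase_eigenvalues]
  simpa using key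

theorem stmt_2 (n : ℕ) (hn : 2 ≤ n) (A : Matrix (Fin n) (Fin n) ℝ)
    (hsymm : A.IsSymm) (hpos : A.PosDef) :
    A.adjugate.trace ≥ A.trace ^ ((1 : ℝ) / (n - 1)) * A.det ^ (((n : ℝ) - 2) / ((n : ℝ) - 1)) :=
  stmt_2_general n hn A hpos
end

section
/- Let $n \geq 2$, $1 < p < n$, and $\psi > 0$. Define $H(t) = \int_0^t e^{\frac{1}{p} s^p} s^{n-1} \, ds$ and $I(t) = \frac{1}{n\psi} e^{\frac{t^p}{p}}$. Then there exists exactly one $t > 0$ with $H(t) = I(t)$. -/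
/-! With `K = 1/(nψ)`, the derivative of `H - I` is `exp(t^p/p) t^(p-1) (t^(n-p) - K)`, negative
before `c = K^(1/(n-p))` and positive after. So `H - I` decreases from `-K` on `[0, c]`, then
increases strictly to `∞` (it dominates the same difference with `2K` in place of `K`, plus
`K exp(t^p/p)`), and has exactly one positive zero. -/

open Real Set Filter

theorem existsUnique_pos_eq_zero_of_strictMonoOn_Ici {f : ℝ → ℝ} {c : ℝ} (hc : 0 < c)
    (hf : Continuous f) (hneg : ∀ t ∈ Ioc 0 c, f t < 0) (hmono : StrictMonoOn f (Ici c))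
    (htop : Tendsto f atTop atTop) : ∃! t, 0 < t ∧ f t = 0 := by
  obtain ⟨T, hT, hcT⟩ := ((htop.eventually_gt_atTop 0).and (eventually_ge_atTop c)).exists
  obtain ⟨t, ⟨hct, -⟩, hft⟩ := intermediate_value_Icc hcT hf.continuousOn
    ⟨(hneg c ⟨hc, le_rfl⟩).le, hT.le⟩
  refine ⟨t, ⟨hc.trans_le hct, hft⟩, fun y ⟨hy, hfy⟩ => ?_⟩
  have hcy : c ≤ y := not_lt.1 fun hyc => (hneg y ⟨hy, hyc.le⟩).ne hfy
  exact hmono.injOn hcy hct (hfy.trans hft.symm)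

theorem hasDerivAt_exp_rpow_div {p x : ℝ} (hp : p ≠ 0) (hx : x ≠ 0) :
    HasDerivAt (fun t => exp (t ^ p / p)) (exp (x ^ p / p) * x ^ (p - 1)) x := by
  have h := ((hasDerivAt_rpow_const (p := p) (Or.inl hx)).div_const p).exp
  rwa [mul_div_cancel_left₀ _ hp] at h

theorem continuous_exp_rpow_div_mul_rpow {p r : ℝ} (hp : 0 ≤ p) (hr : 0 ≤ r) :
    Continuous fun s : ℝ => exp (s ^ p / p) * s ^ r := by
  fun_prop (disch := assumption)

/-- `crossingGap p n (1 / (n * ψ))` is `H - I` in the notation of the paper. -/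
noncomputable def crossingGap (p q K t : ℝ) : ℝ :=
  (∫ s in (0 : ℝ)..t, exp (s ^ p / p) * s ^ (q - 1)) - K * exp (t ^ p / p)

section crossingGap

variable {p q K : ℝ}

theorem crossingGap_zero (hp : p ≠ 0) : crossingGap p q K 0 = -K := by
  simp [crossingGap, zero_rpow hp]

theorem continuous_crossingGap (hp : 0 ≤ p) (hq : 1 ≤ q) : Continuous (crossingGap p q K) := by
  have hint := continuous_exp_rpow_div_mul_rpow hp (r := q - 1) (by linarith)
  unfold crossingGap
  exact (intervalIntegral.continuous_primitive (fun a b => hint.intervalIntegrable a b) 0).sub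
    (by fun_prop (disch := assumption))

theorem hasDerivAt_crossingGap (hp : 0 < p) (hq : 1 ≤ q) {x : ℝ} (hx : 0 < x) :
    HasDerivAt (crossingGap p q K) (exp (x ^ p / p) * x ^ (p - 1) * (x ^ (q - p) - K)) x := by
  have hint := continuous_exp_rpow_div_mul_rpow hp.le (r := q - 1) (by linarith)
  have hH := intervalIntegral.integral_hasDerivAt_right (hint.intervalIntegrable 0 x)
    (hint.stronglyMeasurableAtFilter _ _) hint.continuousAt
  have hsplit : x ^ (q - 1) = x ^ (p - 1) * x ^ (q - p) := by
    rw [← rpow_add hx]; ring_nf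
  exact (hH.sub ((hasDerivAt_exp_rpow_div hp.ne' hx.ne').const_mul K)).congr_deriv
    (by rw [hsplit]; ring)

theorem crossingGap_neg (hp : 0 < p) (hpq : p < q) (hq : 1 ≤ q) (hK : 0 < K) :
    ∀ t ∈ Icc 0 (K ^ (q - p)⁻¹), crossingGap p q K t < 0 := by
  have hanti : AntitoneOn (crossingGap p q K) (Icc 0 (K ^ (q - p)⁻¹)) := by
    refine antitoneOn_of_deriv_nonpos (convex_Icc _ _)
      (continuous_crossingGap hp.le hq).continuousOn (fun x hx => ?_) (fun x hx => ?_)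
    all_goals obtain ⟨hx0, hxc⟩ : x ∈ Ioo 0 (K ^ (q - p)⁻¹) := by rwa [interior_Icc] at hx
    · exact (hasDerivAt_crossingGap hp hq hx0).differentiableAt.differentiableWithinAt
    · have hxK : x ^ (q - p) < K := (lt_rpow_inv_iff_of_pos hx0.le hK.le (by linarith)).1 hxc
      rw [(hasDerivAt_crossingGap hp hq hx0).deriv]
      exact mul_nonpos_of_nonneg_of_nonpos (by positivity) (by linarith)
  intro t ht
  calc crossingGap p q K t ≤ crossingGap p q K 0 :=
        hanti ⟨le_rfl, rpow_nonneg hK.le _⟩ ht ht.1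
    _ < 0 := by rw [crossingGap_zero hp.ne']; linarith

theorem strictMonoOn_crossingGap (hp : 0 < p) (hpq : p < q) (hq : 1 ≤ q) (hK : 0 ≤ K) :
    StrictMonoOn (crossingGap p q K) (Ici (K ^ (q - p)⁻¹)) := by
  refine strictMonoOn_of_deriv_pos (convex_Ici _)
    (continuous_crossingGap hp.le hq).continuousOn (fun x hx => ?_)
  rw [interior_Ici] at hx
  have hx0 : 0 < x := (rpow_nonneg hK _).trans_lt hx
  have hKx : K < x ^ (q - p) := (rpow_inv_lt_iff_of_pos hK hx0.le (by linarith)).1 hx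
  rw [(hasDerivAt_crossingGap hp hq hx0).deriv]
  exact mul_pos (by positivity) (by linarith)

theorem tendsto_crossingGap_atTop (hp : 0 < p) (hpq : p < q) (hq : 1 ≤ q) (hK : 0 < K) :
    Tendsto (crossingGap p q K) atTop atTop := by
  set c := (2 * K) ^ (q - p)⁻¹
  have hsplit : crossingGap p q K = fun t => crossingGap p q (2 * K) t + K * exp (t ^ p / p) := by
    funext t; unfold crossingGap; ring
  have hmono := (strictMonoOn_crossingGap hp hpq hq (by positivity : 0 ≤ 2 * K)).monotoneOn
  rw [hsplit]
  refine tendsto_atTop_add_left_of_le' atTop (crossingGap p q (2 * K) c) ?_ ?_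
  · filter_upwards [eventually_ge_atTop c] with t ht
    exact hmono self_mem_Ici ht ht
  · exact (tendsto_exp_atTop.comp ((tendsto_rpow_atTop hp).atTop_div_const hp)).const_mul_atTop hK

end crossingGap

theorem stmt_10_general (n : ℕ) (p : ℝ) (hp1 : 1 < p) (hpn : p < n) (ψ : ℝ) (hψ : 0 < ψ) :
    ∃! t : ℝ, 0 < t ∧
      (∫ s in (0 : ℝ)..t, Real.exp (s ^ p / p) * s ^ ((n : ℝ) - 1)) =
        1 / (n * ψ) * Real.exp (t ^ p / p) := by
  have hp : 0 < p := by linarith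
  have hn1 : (1 : ℝ) ≤ n := by exact_mod_cast (Nat.cast_pos.1 (hp.trans hpn) : 0 < n)
  have hK : 0 < 1 / (n * ψ) := by positivity
  simp_rw [← sub_eq_zero (b := 1 / (n * ψ) * _)]
  exact existsUnique_pos_eq_zero_of_strictMonoOn_Ici (by positivity)
    (continuous_crossingGap hp.le hn1)
    (fun t ht => crossingGap_neg hp hpn hn1 hK t (Ioc_subset_Icc_self ht))
    (strictMonoOn_crossingGap hp hpn hn1 hK.le) (tendsto_crossingGap_atTop hp hpn hn1 hK)

theorem stmt_10 (n : ℕ) (hn : 2 ≤ n) (p : ℝ) (hp1 : 1 < p) (hpn : p < n) (ψ : ℝ) (hψ : 0 < ψ) :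
    ∃! t : ℝ, 0 < t ∧
      (∫ s in (0 : ℝ)..t, Real.exp (s ^ p / p) * s ^ ((n : ℝ) - 1)) =
        1 / (n * ψ) * Real.exp (t ^ p / p) :=
  stmt_10_general n p hp1 hpn ψ hψ
end
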